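/- Assume (H0) and d₁, d₂, l > 0. Then for every natural number k and every real ω, Ĉ_k(ω) < 0. -/

import Mathlib

open Real

/-- Δ = M² − 4·K·(a·m + c·p)·(a·r₂ + c·d − c·r₀) with M = a·m + c·p + K·(a·r₂ + c·d). -/
noncomputable def Delta (r₀ r₂ K d a p c m : ℝ) : ℝ :=
  (a*m + c*p + K*(a*r₂ + c*d))^2 - 4*K*(a*m + c*p)*(a*r₂ + c*d - c*r₀)

/-- The positive equilibrium predator density v⋆. -/
noncomputable def vstar (r₀ r₂ K d a p c m : ℝ) : ℝ :=
  (-(a*m + c*p + K*(a*r₂ + c*d)) + Real.sqrt (Delta r₀ r₂ K d a p c m)) / (2*K*(a*m + c*p))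

/-- The positive equilibrium prey density u⋆ = (r₂ + m·v⋆)/c. -/
noncomputable def ustar (r₀ r₂ K d a p c m : ℝ) : ℝ := (r₂ + m * vstar r₀ r₂ K d a p c m) / c

/-- Linearization coefficient a₁₂. -/
noncomputable def a12 (r₀ r₂ K d a p c m : ℝ) : ℝ :=
  -K*r₀*ustar r₀ r₂ K d a p c m / (1 + K*vstar r₀ r₂ K d a p c m)^2 - p*ustar r₀ r₂ K d a p c m

/-- Linearization coefficient a₂₁. -/
noncomputable def a21 (r₀ r₂ K d a p c m : ℝ) : ℝ := c * vstar r₀ r₂ K d a p c m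

/-- Linearization coefficient a₂₂. -/
noncomputable def a22 (r₀ r₂ K d a p c m : ℝ) : ℝ := -m * vstar r₀ r₂ K d a p c m

/-- Linearization coefficient b₁₁. -/
noncomputable def b11 (r₀ r₂ K d a p c m : ℝ) : ℝ := -a * ustar r₀ r₂ K d a p c m

/-- A_k = (d₁ + d₂)·k²/l² − a₂₂. -/
noncomputable def Ak (r₀ r₂ K d a p c m d₁ d₂ l : ℝ) (k : ℕ) : ℝ :=
  (d₁ + d₂)*(k:ℝ)^2/l^2 - a22 r₀ r₂ K d a p c m

/-- B_k = d₁·d₂·k⁴/l⁴ − a₂₂·d₁·k²/l² − a₁₂·a₂₁. -/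
noncomputable def Bk (r₀ r₂ K d a p c m d₁ d₂ l : ℝ) (k : ℕ) : ℝ :=
  d₁*d₂*(k:ℝ)^4/l^4 - a22 r₀ r₂ K d a p c m * d₁*(k:ℝ)^2/l^2 - a12 r₀ r₂ K d a p c m * a21 r₀ r₂ K d a p c m

/-- C_k = −b₁₁·d₂·k²/l² + a₂₂·b₁₁. -/
noncomputable def Ck (r₀ r₂ K d a p c m d₁ d₂ l : ℝ) (k : ℕ) : ℝ :=
  -(b11 r₀ r₂ K d a p c m)*d₂*(k:ℝ)^2/l^2 + a22 r₀ r₂ K d a p c m * b11 r₀ r₂ K d a p c m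

/-- Ĉ_k(ω) = (d₁·b₁₁·ω²·k²/l² − B_k·C_k)/(b₁₁²·ω² + C_k²). -/
noncomputable def Chat (r₀ r₂ K d a p c m d₁ d₂ l : ℝ) (k : ℕ) (ω : ℝ) : ℝ :=
  (d₁ * b11 r₀ r₂ K d a p c m * ω^2 * (k:ℝ)^2/l^2 - Bk r₀ r₂ K d a p c m d₁ d₂ l k * Ck r₀ r₂ K d a p c m d₁ d₂ l k) /
    ((b11 r₀ r₂ K d a p c m)^2*ω^2 + (Ck r₀ r₂ K d a p c m d₁ d₂ l k)^2)

/-- S_k(ω) = (A_k·C_k·ω + B_k·b₁₁·ω − b₁₁·ω³)/(b₁₁²·ω² + C_k²). -/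
noncomputable def Sk (r₀ r₂ K d a p c m d₁ d₂ l : ℝ) (k : ℕ) (ω : ℝ) : ℝ :=
  (Ak r₀ r₂ K d a p c m d₁ d₂ l k * Ck r₀ r₂ K d a p c m d₁ d₂ l k * ω + Bk r₀ r₂ K d a p c m d₁ d₂ l k * b11 r₀ r₂ K d a p c m * ω - b11 r₀ r₂ K d a p c m * ω^3) /
    ((b11 r₀ r₂ K d a p c m)^2*ω^2 + (Ck r₀ r₂ K d a p c m d₁ d₂ l k)^2)


/-!
`v⋆` is the larger root of `K(am + cp)·v² + M·v + (ar₂ + cd − cr₀)`. By (H0) the constant term is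
negative, so the two roots have opposite signs and `v⋆ > 0`, hence `u⋆ > 0`. This yields the sign
pattern `b₁₁ < 0`, `a₂₂ < 0`, `a₁₂ < 0 < a₂₁`, under which every term of `B_k` and `C_k` is
nonnegative and their `k`-free terms `−a₁₂a₂₁`, `a₂₂b₁₁` are positive. Thus `B_k C_k > 0`, the
`ω`-term of the numerator of `Ĉ_k` is nonpositive, and the denominator is at least `C_k² > 0`.
-/

lemma quadratic_root_pos {α β γ : ℝ} (hα : 0 < α) (hγ : γ < 0) :
    0 < (-β + √(β ^ 2 - 4 * α * γ)) / (2 * α) := by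
  have hroot : |β| < √(β ^ 2 - 4 * α * γ) :=
    (lt_sqrt (abs_nonneg β)).2 (by rw [sq_abs]; nlinarith [mul_pos hα (neg_pos.2 hγ)])
  exact div_pos (by linarith [le_abs_self β]) (by positivity)

section Equilibrium

variable {r₀ r₂ K d a p c m d₁ d₂ l : ℝ}

lemma vstar_pos (hK : 0 < K) (ha : 0 < a) (hc : 0 < c) (hp : 0 < p) (hm : 0 < m)
    (hH0 : a*r₂ + c*d - c*r₀ < 0) : 0 < vstar r₀ r₂ K d a p c m := by
  have hKS : 0 < K * (a*m + c*p) := by positivity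
  have h := quadratic_root_pos (β := a*m + c*p + K*(a*r₂ + c*d)) hKS hH0
  unfold vstar Delta
  rwa [mul_assoc 2 K, mul_assoc 4 K]

lemma ustar_pos (hr₂ : 0 < r₂) (hm : 0 < m) (hc : 0 < c) (hv : 0 < vstar r₀ r₂ K d a p c m) :
    0 < ustar r₀ r₂ K d a p c m := by
  unfold ustar; positivity

lemma b11_neg (ha : 0 < a) (hu : 0 < ustar r₀ r₂ K d a p c m) : b11 r₀ r₂ K d a p c m < 0 := by
  unfold b11; nlinarith

lemma a22_neg (hm : 0 < m) (hv : 0 < vstar r₀ r₂ K d a p c m) : a22 r₀ r₂ K d a p c m < 0 := by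
  unfold a22; nlinarith

lemma a21_pos (hc : 0 < c) (hv : 0 < vstar r₀ r₂ K d a p c m) : 0 < a21 r₀ r₂ K d a p c m := by
  unfold a21; positivity

lemma a12_neg (hr₀ : 0 < r₀) (hK : 0 < K) (hp : 0 < p) (hu : 0 < ustar r₀ r₂ K d a p c m) :
    a12 r₀ r₂ K d a p c m < 0 := by
  have hsat : 0 ≤ K * r₀ * ustar r₀ r₂ K d a p c m / (1 + K * vstar r₀ r₂ K d a p c m) ^ 2 := by
    positivity
  have hpu : 0 < p * ustar r₀ r₂ K d a p c m := mul_pos hp hu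
  unfold a12
  rw [neg_mul, neg_mul, neg_div]
  linarith

lemma Bk_pos (hd₁ : 0 ≤ d₁) (hd₂ : 0 ≤ d₂) (h22 : a22 r₀ r₂ K d a p c m < 0)
    (h12 : a12 r₀ r₂ K d a p c m < 0) (h21 : 0 < a21 r₀ r₂ K d a p c m) (k : ℕ) :
    0 < Bk r₀ r₂ K d a p c m d₁ d₂ l k := by
  have hquartic : 0 ≤ d₁ * d₂ * (k : ℝ) ^ 4 / l ^ 4 := by positivity
  have hquadratic : a22 r₀ r₂ K d a p c m * d₁ * (k : ℝ) ^ 2 / l ^ 2 ≤ 0 :=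
    div_nonpos_of_nonpos_of_nonneg
      (mul_nonpos_of_nonpos_of_nonneg (mul_nonpos_of_nonpos_of_nonneg h22.le hd₁) (by positivity))
      (by positivity)
  have hcross := mul_neg_of_neg_of_pos h12 h21
  unfold Bk
  linarith

lemma Ck_pos (hd₂ : 0 ≤ d₂) (hb : b11 r₀ r₂ K d a p c m < 0) (h22 : a22 r₀ r₂ K d a p c m < 0)
    (k : ℕ) : 0 < Ck r₀ r₂ K d a p c m d₁ d₂ l k := by
  have hdiff : 0 ≤ -b11 r₀ r₂ K d a p c m * d₂ * (k : ℝ) ^ 2 / l ^ 2 := by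
    have := neg_pos.2 hb; positivity
  have hreact := mul_pos_of_neg_of_neg h22 hb
  unfold Ck
  linarith

lemma Chat_neg (hd₁ : 0 ≤ d₁) (hb : b11 r₀ r₂ K d a p c m ≤ 0)
    {k : ℕ} (hB : 0 < Bk r₀ r₂ K d a p c m d₁ d₂ l k) (hC : 0 < Ck r₀ r₂ K d a p c m d₁ d₂ l k)
    (ω : ℝ) : Chat r₀ r₂ K d a p c m d₁ d₂ l k ω < 0 := by
  have hfirst : d₁ * b11 r₀ r₂ K d a p c m * ω ^ 2 * (k : ℝ) ^ 2 / l ^ 2 ≤ 0 :=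
    div_nonpos_of_nonpos_of_nonneg
      (mul_nonpos_of_nonpos_of_nonneg
        (mul_nonpos_of_nonpos_of_nonneg (mul_nonpos_of_nonneg_of_nonpos hd₁ hb) (by positivity))
        (by positivity))
      (by positivity)
  have hBC := mul_pos hB hC
  unfold Chat
  exact div_neg_of_neg_of_pos (by linarith) (by positivity)

end Equilibrium

theorem stmt8_general (r₀ r₂ K d a p c m d₁ d₂ l : ℝ) (hr₀ : 0 < r₀) (hr₂ : 0 < r₂) (hK : 0 < K) (ha : 0 < a) (hp : 0 < p) (hc : 0 < c) (hm : 0 < m)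
    (hd₁ : 0 < d₁) (hd₂ : 0 < d₂)
    (hH0 : a*r₂ + c*d - c*r₀ < 0) :
    ∀ (k : ℕ) (ω : ℝ), Chat r₀ r₂ K d a p c m d₁ d₂ l k ω < 0 := by
  intro k ω
  have hv := vstar_pos hK ha hc hp hm hH0
  have hu := ustar_pos hr₂ hm hc hv
  have hb := b11_neg ha hu
  have h22 := a22_neg hm hv
  exact Chat_neg hd₁.le hb.le (Bk_pos hd₁.le hd₂.le h22 (a12_neg hr₀ hK hp hu) (a21_pos hc hv) k)
    (Ck_pos hd₂.le hb h22 k) ω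

theorem stmt8 (r₀ r₂ K d a p c m d₁ d₂ l : ℝ) (hr₀ : 0 < r₀) (hr₂ : 0 < r₂) (hK : 0 < K) (hd : 0 < d) (ha : 0 < a) (hp : 0 < p) (hc : 0 < c) (hm : 0 < m)
    (hd₁ : 0 < d₁) (hd₂ : 0 < d₂) (hl : 0 < l)
    (hH0 : a*r₂ + c*d - c*r₀ < 0) :
    ∀ (k : ℕ) (ω : ℝ), Chat r₀ r₂ K d a p c m d₁ d₂ l k ω < 0 :=
  stmt8_general r₀ r₂ K d a p c m d₁ d₂ l hr₀ hr₂ hK ha hp hc hm hd₁ hd₂ hH0
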